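/- arXiv:0802.1942 — 3 statements merged into one kernel-verified Lean document; each statement's English description precedes it below -/
import Mathlib

section
/- For 1 ≤ p < ∞ and n ≥ 2, the integral φ(p) = ∫_{B_p^n} x_1^2 dx equals (2/p)·|B_p^{n−1}|·Γ(3/p)Γ(1+(n−1)/p)/Γ(1+(n+2)/p). -/
open MeasureTheory Set Real
open scoped Pointwise

/-!
The slice of `B_p^n` at height `x_1 = t` is `B_p^{n-1}` dilated by `(1 - |t|^p)^{1/p}`, so by
Fubini `φ(p) = |B_p^{n-1}| ∫ t^2 (1 - |t|^p)^{(n-1)/p} dt` over `(-1, 1)`. The integrand is even,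
and the substitution `u = t^p` turns the integral over `(0, 1)` into `p⁻¹ B(3/p, 1 + (n-1)/p)`,
a ratio of Gamma values.
-/

theorem integral_Ioo_rpow_mul_one_sub_rpow {a b : ℝ} (ha : 0 < a) (hb : 0 < b) :
    ∫ x in Ioo (0 : ℝ) 1, x ^ (a - 1) * (1 - x) ^ (b - 1) =
      Gamma a * Gamma b / Gamma (a + b) := by
  have hbeta : Complex.betaIntegral a b =
      ((∫ x in Ioo (0 : ℝ) 1, x ^ (a - 1) * (1 - x) ^ (b - 1) : ℝ) : ℂ) := by
    rw [Complex.betaIntegral, intervalIntegral.integral_of_le zero_le_one,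
      integral_Ioc_eq_integral_Ioo, ← integral_complex_ofReal]
    refine setIntegral_congr_fun measurableSet_Ioo fun x hx => ?_
    push_cast [Complex.ofReal_cpow hx.1.le, Complex.ofReal_cpow (sub_pos.2 hx.2).le]
    ring
  have hGamma := Complex.Gamma_mul_Gamma_eq_betaIntegral
    (s := a) (t := b) (by simpa using ha) (by simpa using hb)
  rw [hbeta, ← Complex.ofReal_add, Complex.Gamma_ofReal, Complex.Gamma_ofReal,
    Complex.Gamma_ofReal] at hGamma
  rw [eq_div_iff (Gamma_pos_of_pos (add_pos ha hb)).ne', mul_comm]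
  exact_mod_cast hGamma.symm

theorem integral_Ioi_rpow_mul_comp_rpow {p : ℝ} (hp : 0 < p) (a : ℝ) (g : ℝ → ℝ) :
    ∫ x in Ioi (0 : ℝ), x ^ a * g (x ^ p) =
      p⁻¹ * ∫ u in Ioi (0 : ℝ), u ^ ((a + 1) / p - 1) * g u := by
  rw [← integral_comp_rpow_Ioi_of_pos (g := fun u => u ^ ((a + 1) / p - 1) * g u) hp,
    ← integral_const_mul]
  refine setIntegral_congr_fun measurableSet_Ioi fun x (hx : 0 < x) => ?_
  have hexp : x ^ (p - 1) * (x ^ p) ^ ((a + 1) / p - 1) = x ^ a := by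
    rw [← rpow_mul hx.le, ← rpow_add hx]
    congr 1
    field_simp
    ring
  rw [smul_eq_mul, ← hexp]
  field_simp

theorem setIntegral_comp_fst {α β : Type*} [MeasurableSpace α] [MeasurableSpace β]
    {μ : Measure α} {ν : Measure β} [SFinite μ] [SFinite ν] {s : Set (α × β)}
    (hs : MeasurableSet s) {g : α → ℝ} (hg : IntegrableOn (fun q => g q.1) s (μ.prod ν)) :
    ∫ q in s, g q.1 ∂μ.prod ν = ∫ a, ν.real (Prod.mk a ⁻¹' s) * g a ∂μ := by
  rw [← integral_indicator hs, integral_prod _ (hg.integrable_indicator hs)]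
  congr 1 with a
  change ∫ b, (Prod.mk a ⁻¹' s).indicator (fun _ => g a) b ∂ν = _
  rw [integral_indicator_const _ (measurable_prodMk_left hs), smul_eq_mul]

-- `lpSublevel ι p 1` is the unit ball of `ℓ_p^ι`; for `c > 0`, `lpSublevel ι p c` is its dilate
-- by `c ^ p⁻¹`.
def lpSublevel (ι : Type*) [Fintype ι] (p c : ℝ) : Set (ι → ℝ) := {x | ∑ i, |x i| ^ p ≤ c}

namespace lpSublevel

variable {ι : Type*} [Fintype ι] {p c : ℝ}

theorem isClosed (hp : 0 ≤ p) : IsClosed (lpSublevel ι p c) :=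
  isClosed_le (continuous_finsetSum _ fun i _ => (continuous_apply i).abs.rpow_const
    fun _ => Or.inr hp) continuous_const

theorem isBounded (hp : 0 < p) : Bornology.IsBounded (lpSublevel ι p c) := by
  refine (Metric.isBounded_closedBall (x := 0) (r := |c| ^ p⁻¹)).subset fun x hx => ?_
  rw [mem_closedBall_zero_iff, pi_norm_le_iff_of_nonneg (by positivity)]
  intro i
  rw [Real.norm_eq_abs, le_rpow_inv_iff_of_pos (abs_nonneg _) (abs_nonneg _) hp]
  calc |x i| ^ p ≤ ∑ j, |x j| ^ p :=
        Finset.single_le_sum (fun j _ => rpow_nonneg (abs_nonneg _) p) (Finset.mem_univ i)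
    _ ≤ |c| := hx.trans (le_abs_self c)

theorem isCompact (hp : 0 < p) : IsCompact (lpSublevel ι p c) :=
  Metric.isCompact_of_isClosed_isBounded (isClosed hp.le) (isBounded hp)

theorem eq_empty_of_neg (hc : c < 0) : lpSublevel ι p c = ∅ :=
  eq_empty_of_forall_notMem fun x hx =>
    (hc.trans_le (Finset.sum_nonneg fun i _ => rpow_nonneg (abs_nonneg (x i)) p)).not_ge hx

theorem eq_smul (hp : 0 < p) (hc : 0 < c) : lpSublevel ι p c = c ^ p⁻¹ • lpSublevel ι p 1 := by
  have hr : 0 < c ^ p⁻¹ := rpow_pos_of_pos hc _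
  ext x
  rw [mem_smul_set_iff_inv_smul_mem₀ hr.ne']
  simp only [lpSublevel, mem_ofPred_eq, Pi.smul_apply, smul_eq_mul, abs_mul,
    abs_of_pos (inv_pos.2 hr), mul_rpow (inv_nonneg.2 hr.le) (abs_nonneg _), ← Finset.mul_sum,
    inv_rpow hr.le, ← rpow_mul hc.le, inv_mul_cancel₀ hp.ne', rpow_one, inv_mul_le_iff₀ hc, mul_one]

theorem volume_eq (hp : 0 < p) (hc : 0 < c) :
    volume (lpSublevel ι p c) =
      ENNReal.ofReal (c ^ (Fintype.card ι / p)) * volume (lpSublevel ι p 1) := by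
  rw [eq_smul hp hc, Measure.addHaar_smul_of_nonneg _ (rpow_pos_of_pos hc _).le,
    Module.finrank_fintype_fun_eq_card, ← rpow_natCast, ← rpow_mul hc.le, inv_mul_eq_div]

end lpSublevel

theorem setIntegral_lpSublevel_succ {m : ℕ} {p c : ℝ} (hp : 0 < p) {g : ℝ → ℝ}
    (hg : Continuous g) :
    ∫ x in lpSublevel (Fin (m + 1)) p c, g (x 0) =
      ∫ t, volume.real (lpSublevel (Fin m) p (c - |t| ^ p)) * g t := by
  let e := MeasurableEquiv.piFinSuccAbove (fun _ : Fin (m + 1) => ℝ) 0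
  have he : MeasurePreserving e volume (volume.prod volume) :=
    volume_preserving_piFinSuccAbove _ 0
  set s := e.symm ⁻¹' lpSublevel (Fin (m + 1)) p c
  have hball : e ⁻¹' s = lpSublevel (Fin (m + 1)) p c := e.preimage_symm_preimage _
  have hs : MeasurableSet s :=
    e.symm.measurable (lpSublevel.isClosed hp.le).measurableSet
  have hint : IntegrableOn (fun q : ℝ × (Fin m → ℝ) => g q.1) s (volume.prod volume) := by
    rw [← he.integrableOn_comp_preimage e.measurableEmbedding, hball]
    exact (hg.comp (continuous_apply 0)).continuousOn.integrableOn_compact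
      (lpSublevel.isCompact hp)
  calc ∫ x in lpSublevel (Fin (m + 1)) p c, g (x 0)
      = ∫ x in e ⁻¹' s, g (e x).1 := by rw [hball]; rfl
    _ = ∫ q in s, g q.1 ∂volume.prod volume :=
      he.setIntegral_preimage_emb e.measurableEmbedding (fun q => g q.1) s
    _ = ∫ t, volume.real (Prod.mk t ⁻¹' s) * g t := setIntegral_comp_fst hs hint
    _ = ∫ t, volume.real (lpSublevel (Fin m) p (c - |t| ^ p)) * g t := by
      congr with t
      congr 2 with y
      simp [s, e, lpSublevel, Fin.sum_univ_succ, le_sub_iff_add_le']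

section BetaIntegral

variable {ι : Type*} [Fintype ι] {p : ℝ}

theorem integral_Ioi_rpow_mul_measureReal_lpSublevel_one_sub (hp : 0 < p) {a : ℝ} (ha : 0 < a) :
    ∫ u in Ioi (0 : ℝ), u ^ (a - 1) * volume.real (lpSublevel ι p (1 - u)) =
      volume.real (lpSublevel ι p 1) *
        (Gamma a * Gamma (Fintype.card ι / p + 1) / Gamma (a + (Fintype.card ι / p + 1))) := by
  set k : ℝ := Fintype.card ι / p
  set V := volume.real (lpSublevel ι p 1)
  calc ∫ u in Ioi (0 : ℝ), u ^ (a - 1) * volume.real (lpSublevel ι p (1 - u))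
      = ∫ u in Ioc (0 : ℝ) 1, u ^ (a - 1) * volume.real (lpSublevel ι p (1 - u)) := by
        refine setIntegral_eq_of_subset_of_forall_sdiff_eq_zero measurableSet_Ioi
          Ioc_subset_Ioi_self fun u hu => ?_
        have hu1 : 1 < u := lt_of_not_ge fun h => hu.2 ⟨hu.1, h⟩
        rw [lpSublevel.eq_empty_of_neg (sub_neg.2 hu1), measureReal_empty, mul_zero]
    _ = ∫ u in Ioo (0 : ℝ) 1, u ^ (a - 1) * (1 - u) ^ (k + 1 - 1) * V := by
        rw [integral_Ioc_eq_integral_Ioo]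
        refine setIntegral_congr_fun measurableSet_Ioo fun u hu => ?_
        rw [measureReal_def, lpSublevel.volume_eq hp (sub_pos.2 hu.2), ENNReal.toReal_mul,
          ENNReal.toReal_ofReal (rpow_nonneg (sub_pos.2 hu.2).le _), add_sub_cancel_right,
          mul_assoc]
        rfl
    _ = V * (Gamma a * Gamma (k + 1) / Gamma (a + (k + 1))) := by
        rw [integral_mul_const, integral_Ioo_rpow_mul_one_sub_rpow ha (by positivity), mul_comm]

theorem integral_measureReal_lpSublevel_one_sub_abs_rpow_mul_sq (hp : 0 < p) :
    ∫ t, volume.real (lpSublevel ι p (1 - |t| ^ p)) * t ^ 2 =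
      2 / p * volume.real (lpSublevel ι p 1) *
        (Gamma (3 / p) * Gamma (Fintype.card ι / p + 1) /
          Gamma (3 / p + (Fintype.card ι / p + 1))) := by
  set G : ℝ → ℝ := fun u => volume.real (lpSublevel ι p (1 - u))
  calc ∫ t, volume.real (lpSublevel ι p (1 - |t| ^ p)) * t ^ 2
      = ∫ t, (fun s => s ^ (2 : ℝ) * G (s ^ p)) |t| := by
        congr with t
        change _ = |t| ^ (2 : ℝ) * G (|t| ^ p)
        rw [rpow_two, sq_abs, mul_comm]
    _ = 2 * (p⁻¹ * ∫ u in Ioi (0 : ℝ), u ^ ((2 + 1) / p - 1) * G u) := by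
        rw [integral_comp_abs (f := fun s => s ^ (2 : ℝ) * G (s ^ p)),
          integral_Ioi_rpow_mul_comp_rpow hp]
    _ = _ := by
        rw [show ((2 : ℝ) + 1) / p = 3 / p by norm_num,
          integral_Ioi_rpow_mul_measureReal_lpSublevel_one_sub hp (by positivity)]
        ring

end BetaIntegral

theorem phi_p_formula (n : ℕ) (hn : 2 ≤ n) (p : ℝ) (hp : 1 ≤ p) :
    ∫ x in {x : Fin n → ℝ | ∑ i, |x i| ^ p ≤ 1}, (x ⟨0, by omega⟩) ^ 2 =
      (2 / p) * (volume {x : Fin (n - 1) → ℝ | ∑ i, |x i| ^ p ≤ 1}).toReal *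
        (Real.Gamma (3 / p) * Real.Gamma (1 + ((n : ℝ) - 1) / p) /
          Real.Gamma (1 + ((n : ℝ) + 2) / p)) := by
  obtain ⟨m, rfl⟩ : ∃ m, n = m + 1 := ⟨n - 1, by omega⟩
  have hp₀ : 0 < p := by linarith
  have hslice := setIntegral_lpSublevel_succ (m := m) (c := 1) hp₀ (continuous_pow 2)
  have hbeta := integral_measureReal_lpSublevel_one_sub_abs_rpow_mul_sq (ι := Fin m) hp₀
  rw [Fintype.card_fin] at hbeta
  change ∫ x in lpSublevel (Fin (m + 1)) p 1, x 0 ^ 2 =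
    2 / p * volume.real (lpSublevel (Fin m) p 1) * _
  rw [hslice, hbeta, show 1 + ((m + 1 : ℕ) - 1 : ℝ) / p = m / p + 1 by push_cast; ring,
    show 1 + ((m + 1 : ℕ) + 2 : ℝ) / p = 3 / p + (m / p + 1) by push_cast; field_simp; ring]
end

section
/- For n ≥ 1, the quantity f(n,1) := (∫_{B_1^n}∫_{B_∞^n} ⟨x,y⟩^2 dx dy) / (|B_1^n|·|B_∞^n|) equals 2n/(3(n+1)(n+2)). -/
/-!
Integrating over the cube first: its coordinates are uncorrelated with second moment `1/3`, so
the inner integral is `|B_∞^n| ‖x‖₂² / 3`. The second moment of a coordinate `x i` over the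
cross-polytope is computed by slicing orthogonally to the `i`-th axis: the slice at height `t` is
an `(n-1)`-dimensional cross-polytope of radius `1 - |t|`, of volume `(2(1-|t|))^(n-1)/(n-1)!`,
which leaves the Beta integral `∫₀¹ t² (1-t)^(n-1) dt`.
-/

open MeasureTheory Set

section CrossPolytope

variable {ι : Type*} [Fintype ι]

variable (ι) in
def crossPolytope (r : ℝ) : Set (ι → ℝ) := {x | ∑ i, |x i| ≤ r}

lemma isClosed_crossPolytope (r : ℝ) : IsClosed (crossPolytope ι r) :=
  isClosed_le (by fun_prop) continuous_const

lemma isCompact_crossPolytope (r : ℝ) : IsCompact (crossPolytope ι r) := by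
  refine (isCompact_closedBall (0 : ι → ℝ) |r|).of_isClosed_subset (isClosed_crossPolytope r)
    fun x hx => ?_
  rw [Metric.mem_closedBall, dist_zero_right, pi_norm_le_iff_of_nonneg (abs_nonneg r)]
  intro i
  calc ‖x i‖ = |x i| := rfl
    _ ≤ ∑ j, |x j| := Finset.single_le_sum (fun j _ => abs_nonneg (x j)) (Finset.mem_univ i)
    _ ≤ |r| := hx.trans (le_abs_self r)

lemma volume_real_crossPolytope {r : ℝ} (hr : 0 ≤ r) :
    volume.real (crossPolytope ι r) = (2 * r) ^ Fintype.card ι / (Fintype.card ι).factorial := by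
  cases isEmpty_or_nonempty ι
  · have huniv : crossPolytope ι r = univ :=
      eq_univ_of_forall fun x => by simp [crossPolytope, hr]
    rw [huniv, volume_pi, Measure.pi_of_empty]
    simp
  have hlp :
      crossPolytope ι r = {x : ι → ℝ | (∑ i, |x i| ^ (1 : ℝ)) ^ (1 / (1 : ℝ)) ≤ r} := by
    simp [crossPolytope]
  rw [Measure.real, hlp, volume_sum_rpow_le ι le_rfl r, ENNReal.toReal_mul, ENNReal.toReal_pow,
    ENNReal.toReal_ofReal hr, ENNReal.toReal_ofReal (by positivity)]
  simp only [div_one, Real.Gamma_nat_eq_factorial]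
  norm_num [Real.Gamma_two, mul_pow]
  ring

lemma volume_real_crossPolytope_of_neg {r : ℝ} (hr : r < 0) :
    volume.real (crossPolytope ι r) = 0 := by
  have hempty : crossPolytope ι r = ∅ := eq_empty_of_forall_notMem fun x hx =>
    (hr.trans_le (Finset.sum_nonneg fun i _ => abs_nonneg (x i))).not_ge hx
  rw [hempty, measureReal_empty]

end CrossPolytope

lemma setIntegral_prod_comp_fst {α β E : Type*} [MeasurableSpace α] [MeasurableSpace β]
    [NormedAddCommGroup E] [NormedSpace ℝ E] [CompleteSpace E] {μ : Measure α} {ν : Measure β}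
    [SFinite μ] [SFinite ν] {s : Set (α × β)} (hs : MeasurableSet s) {g : α → E}
    (hg : IntegrableOn (fun p => g p.1) s (μ.prod ν)) :
    ∫ p in s, g p.1 ∂μ.prod ν = ∫ a, ν.real (Prod.mk a ⁻¹' s) • g a ∂μ := by
  rw [← integral_indicator hs, integral_prod _ (hg.integrable_indicator hs)]
  congr 1 with a
  have hslice : (fun b => s.indicator (fun p => g p.1) (a, b)) =
      (Prod.mk a ⁻¹' s).indicator fun _ => g a := rfl
  rw [hslice, integral_indicator_const _ (measurable_prodMk_left hs)]

lemma setIntegral_crossPolytope_comp_eval {n : ℕ} (i : Fin (n + 1)) (r : ℝ) {g : ℝ → ℝ}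
    (hg : Continuous g) :
    ∫ x in crossPolytope (Fin (n + 1)) r, g (x i) =
      ∫ t, volume.real (crossPolytope (Fin n) (r - |t|)) * g t := by
  let e := MeasurableEquiv.piFinSuccAbove (fun _ : Fin (n + 1) => ℝ) i
  have he : MeasurePreserving e.symm (volume.prod volume) volume :=
    (volume_preserving_piFinSuccAbove (fun _ : Fin (n + 1) => ℝ) i).symm
  have hcoord : ∀ p, e.symm p i = p.1 := fun p => by simp [e]
  have hmeas : MeasurableSet (e.symm ⁻¹' crossPolytope (Fin (n + 1)) r) :=
    e.symm.measurable (isClosed_crossPolytope r).measurableSet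
  have hint : IntegrableOn (fun p : ℝ × (Fin n → ℝ) => g p.1)
      (e.symm ⁻¹' crossPolytope (Fin (n + 1)) r) (volume.prod volume) := by
    have hcont : IntegrableOn (fun x : Fin (n + 1) → ℝ => g (x i)) (crossPolytope _ r) :=
      (Continuous.continuousOn (by fun_prop)).integrableOn_compact (isCompact_crossPolytope r)
    exact ((he.integrableOn_comp_preimage e.symm.measurableEmbedding).mpr hcont).congr_fun
      (fun p _ => congrArg g (hcoord p)) hmeas
  have hslice : ∀ t, Prod.mk t ⁻¹' (e.symm ⁻¹' crossPolytope (Fin (n + 1)) r) =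
      crossPolytope (Fin n) (r - |t|) := fun t => by
    ext y
    simp only [e, crossPolytope, mem_preimage, mem_ofPred_eq,
      MeasurableEquiv.piFinSuccAbove_symm_apply, Fin.sum_univ_succAbove _ i,
      Fin.insertNthEquiv_apply, Fin.insertNth_apply_same, Fin.insertNth_apply_succAbove]
    constructor <;> intro h <;> linarith
  rw [← he.setIntegral_preimage_emb e.symm.measurableEmbedding]
  simp_rw [hcoord]
  rw [setIntegral_prod_comp_fst hmeas hint]
  simp_rw [hslice, smul_eq_mul]

lemma integral_sq_mul_sub_pow (n : ℕ) (r : ℝ) :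
    ∫ t in (0 : ℝ)..r, t ^ 2 * (r - t) ^ n =
      2 * r ^ (n + 3) / ((n + 1) * (n + 2) * (n + 3)) := by
  have hreflect := intervalIntegral.integral_comp_sub_left (fun u => u ^ 2 * (r - u) ^ n) r
    (a := 0) (b := r)
  simp only [sub_self, sub_zero, sub_sub_cancel] at hreflect
  have hexpand : ∀ u : ℝ,
      (r - u) ^ 2 * u ^ n = r ^ 2 * u ^ n - 2 * r * u ^ (n + 1) + u ^ (n + 2) := fun u => by ring
  rw [← hreflect]
  simp_rw [hexpand]
  rw [intervalIntegral.integral_add, intervalIntegral.integral_sub,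
    intervalIntegral.integral_const_mul, intervalIntegral.integral_const_mul,
    integral_pow, integral_pow, integral_pow]
  · push_cast
    field_simp
    ring
  all_goals exact Continuous.intervalIntegrable (by fun_prop) _ _

lemma setIntegral_crossPolytope_sq_coord {n : ℕ} (i : Fin (n + 1)) {r : ℝ} (hr : 0 ≤ r) :
    ∫ x in crossPolytope (Fin (n + 1)) r, x i ^ 2 =
      2 ^ (n + 2) * r ^ (n + 3) / (n + 3).factorial := by
  set f : ℝ → ℝ := fun s => volume.real (crossPolytope (Fin n) (r - s)) * s ^ 2
  have hf_abs : ∀ t, volume.real (crossPolytope (Fin n) (r - |t|)) * t ^ 2 = f |t| := fun t => by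
    simp only [f, sq_abs]
  have hf_supp : ∀ s ∈ Ioi 0 \ Ioc 0 r, f s = 0 := fun s hs => by
    have hrs : r - s < 0 := by
      simp only [mem_sdiff, mem_Ioi, mem_Ioc, not_and, not_le] at hs
      linarith [hs.2 hs.1]
    simp only [f, volume_real_crossPolytope_of_neg hrs, zero_mul]
  have hf_Icc : ∀ s ∈ uIcc 0 r, f s = 2 ^ n / n.factorial * (s ^ 2 * (r - s) ^ n) := by
    intro s hs
    rw [uIcc_of_le hr] at hs
    simp only [f, volume_real_crossPolytope (sub_nonneg.mpr hs.2), Fintype.card_fin, mul_pow]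
    ring
  rw [setIntegral_crossPolytope_comp_eval i r (continuous_pow 2)]
  simp_rw [hf_abs]
  rw [integral_comp_abs, setIntegral_eq_of_subset_of_forall_sdiff_eq_zero measurableSet_Ioi
    Ioc_subset_Ioi_self hf_supp, ← intervalIntegral.integral_of_le hr,
    intervalIntegral.integral_congr hf_Icc, intervalIntegral.integral_const_mul,
    integral_sq_mul_sub_pow]
  simp only [Nat.factorial_succ]
  push_cast
  field_simp
  ring

lemma setIntegral_crossPolytope_sum_sq (n : ℕ) {r : ℝ} (hr : 0 ≤ r) :
    ∫ x in crossPolytope (Fin n) r, ∑ i, x i ^ 2 =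
      2 * n * 2 ^ n * r ^ (n + 2) / (n + 2).factorial := by
  cases n with
  | zero => simp
  | succ n =>
    rw [integral_finsetSum _ fun i _ =>
      (Continuous.continuousOn (by fun_prop)).integrableOn_compact (isCompact_crossPolytope r)]
    simp_rw [setIntegral_crossPolytope_sq_coord _ hr]
    rw [Finset.sum_const, Finset.card_univ, Fintype.card_fin, nsmul_eq_mul]
    push_cast
    ring

section Cube

variable {ι : Type*}

lemma setOf_forall_abs_le_eq_pi (r : ℝ) :
    {y : ι → ℝ | ∀ i, |y i| ≤ r} = univ.pi fun _ => Icc (-r) r := by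
  ext y
  simp only [mem_ofPred_eq, abs_le, mem_pi, mem_univ, true_implies, mem_Icc]

variable [Fintype ι]

lemma volume_real_cube :
    volume.real (univ.pi fun _ : ι => Icc (-1 : ℝ) 1) = 2 ^ Fintype.card ι := by
  rw [Measure.real, volume_pi_pi]
  simp only [Real.volume_Icc, Finset.prod_const, ENNReal.toReal_pow, Finset.card_univ]
  norm_num

lemma integral_Icc_neg_one_one_pow (k : ℕ) :
    ∫ t in Icc (-1 : ℝ) 1, t ^ k = (1 - (-1) ^ (k + 1)) / (k + 1) := by
  rw [integral_Icc_eq_integral_Ioc, ← intervalIntegral.integral_of_le (by norm_num),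
    integral_pow]
  simp

variable [DecidableEq ι]

lemma integral_cube_coord_mul_coord (i j : ι) :
    ∫ y in univ.pi (fun _ : ι => Icc (-1 : ℝ) 1), y i * y j =
      if i = j then 2 ^ Fintype.card ι / 3 else 0 := by
  have hprod : ∀ y : ι → ℝ,
      y i * y j = ∏ k, (if k = i then y k else 1) * (if k = j then y k else 1) := fun y => by
    rw [Finset.prod_mul_distrib, Finset.prod_ite_eq', Finset.prod_ite_eq']
    simp
  simp_rw [hprod]
  rw [volume_pi, Measure.restrict_pi_pi, integral_fintype_prod_eq_prod
    (f := fun k t => (if k = i then t else 1) * (if k = j then t else 1))]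
  split_ifs with hij
  · subst hij
    have hfactor : ∀ k,
        ∫ t in Icc (-1 : ℝ) 1, (if k = i then t else 1) * (if k = i then t else 1) =
          (if k = i then 1 / 3 else 1) * 2 := fun k => by
      split_ifs
      · simp_rw [← sq, integral_Icc_neg_one_one_pow 2]
        norm_num
      · norm_num
    simp_rw [hfactor]
    rw [Finset.prod_mul_distrib, Finset.prod_ite_eq', Finset.prod_const]
    simp [div_eq_inv_mul]
  · refine Finset.prod_eq_zero (Finset.mem_univ i) ?_
    simpa [hij] using integral_Icc_neg_one_one_pow 1

lemma integral_cube_inner_sq (x : ι → ℝ) :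
    ∫ y in univ.pi (fun _ : ι => Icc (-1 : ℝ) 1), (∑ i, x i * y i) ^ 2 =
      2 ^ Fintype.card ι / 3 * ∑ i, x i ^ 2 := by
  have hexpand : ∀ y : ι → ℝ, (∑ i, x i * y i) ^ 2 = ∑ i, ∑ j, x i * x j * (y i * y j) :=
    fun y => by
      rw [sq, Finset.sum_mul_sum]
      simp only [mul_mul_mul_comm]
  have hint : ∀ i j, Integrable (fun y : ι → ℝ => x i * x j * (y i * y j))
      (volume.restrict (univ.pi fun _ : ι => Icc (-1 : ℝ) 1)) := fun i j =>
    (Continuous.continuousOn (by fun_prop)).integrableOn_compact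
      (isCompact_univ_pi fun _ => isCompact_Icc)
  simp_rw [hexpand]
  rw [integral_finsetSum _ fun i _ => integrable_finsetSum _ fun j _ => hint i j]
  simp_rw [integral_finsetSum _ fun j _ => hint _ j, integral_const_mul,
    integral_cube_coord_mul_coord, mul_ite, mul_zero, Finset.sum_ite_eq, Finset.mem_univ,
    if_true, Finset.mul_sum]
  exact Finset.sum_congr rfl fun i _ => by ring

end Cube

theorem f_n_one_general (n : ℕ) :
    (∫ x in {x : Fin n → ℝ | ∑ i, |x i| ≤ 1},
        ∫ y in {y : Fin n → ℝ | ∀ i, |y i| ≤ 1}, (∑ i, x i * y i) ^ 2) /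
      ((volume {x : Fin n → ℝ | ∑ i, |x i| ≤ 1}).toReal *
        (volume {y : Fin n → ℝ | ∀ i, |y i| ≤ 1}).toReal) =
      2 * n / (3 * (n + 1) * (n + 2)) := by
  change (∫ x in crossPolytope (Fin n) 1, _) / (volume.real (crossPolytope (Fin n) 1) * _) = _
  simp_rw [setOf_forall_abs_le_eq_pi, integral_cube_inner_sq]
  rw [integral_const_mul, setIntegral_crossPolytope_sum_sq n zero_le_one,
    volume_real_crossPolytope zero_le_one, ← Measure.real, volume_real_cube]
  simp only [Fintype.card_fin, Nat.factorial_succ]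
  push_cast
  field_simp
  ring

theorem f_n_one (n : ℕ) (hn : 1 ≤ n) :
    (∫ x in {x : Fin n → ℝ | ∑ i, |x i| ≤ 1},
        ∫ y in {y : Fin n → ℝ | ∀ i, |y i| ≤ 1}, (∑ i, x i * y i) ^ 2) /
      ((volume {x : Fin n → ℝ | ∑ i, |x i| ≤ 1}).toReal *
        (volume {y : Fin n → ℝ | ∀ i, |y i| ≤ 1}).toReal) =
      2 * n / (3 * (n + 1) * (n + 2)) :=
  f_n_one_general n
end

section
/- For 1 < p < ∞ with 1/p + 1/q = 1 and n ≥ 1, (∫_{B_p^n}∫_{B_q^n} ⟨x,y⟩^2 dx dy)/(|B_p^n||B_q^n|) = n·Γ(3/p)Γ(3/q)Γ(1+n/p)Γ(1+n/q) / (Γ(1/p)Γ(1/q)Γ(1+(n+2)/p)Γ(1+(n+2)/q)). -/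
/-!
If `f` is positively homogeneous of degree `d` on a finite-dimensional normed space, polar
coordinates give `∫_{‖x‖ ≤ 1} f = (∫ f(x) e^{-‖x‖^p} dx) / Γ((dim + d)/p + 1)`, since both sides
are the same integral over the sphere times a radial integral. For the `ℓ_p` norm on `ℝⁿ` the
weight `e^{-‖x‖_p^p}` splits into a product over the coordinates, so the moments `∫_{B_p} x_i x_j`
reduce to one-dimensional Gamma integrals: they vanish for `i ≠ j` (odd factor) and equal a
constant `c_p` for `i = j`. Hence `∫_{B_q} ⟨x, y⟩² dy = c_q ‖x‖₂²`, the double integral is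
`n c_p c_q`, and dividing by the volumes `|B_p|`, `|B_q|` (again Gamma quotients) gives the formula.
-/

open MeasureTheory Set Metric Module Real

section Homogeneous

variable {E : Type*} [NormedAddCommGroup E] [NormedSpace ℝ E] [MeasurableSpace E] [BorelSpace E]
  [FiniteDimensional ℝ E] [Nontrivial E] (μ : Measure E) [μ.IsAddHaarMeasure]
  {f : E → ℝ} {d : ℕ}

theorem integral_mul_comp_norm_of_homogeneous
    (hf : ∀ r : ℝ, 0 < r → ∀ x, f (r • x) = r ^ d * f x) (G : ℝ → ℝ) :
    ∫ x, f x * G ‖x‖ ∂μ = (∫ y : sphere (0 : E) 1, f y ∂μ.toSphere) *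
      ∫ r in Ioi (0 : ℝ), r ^ (finrank ℝ E - 1 + d) * G r := by
  -- `x = ‖x‖ • u` with `u` on the sphere, and homogeneity moves `‖x‖ ^ d` out of `f`.
  have h_polar : ∀ x : ({(0 : E)}ᶜ : Set E),
      (fun y : sphere (0 : E) 1 × Ioi (0 : ℝ) ↦ f y.1 * (y.2.1 ^ d * G y.2.1))
        (homeomorphUnitSphereProd E x) = f x * G ‖(x : E)‖ := by
    intro x
    have hx : ‖(x : E)‖ ≠ 0 := norm_ne_zero_iff.2 x.2
    simp only [homeomorphUnitSphereProd, homeomorphSphereProd_apply_fst_coe,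
      homeomorphSphereProd_apply_snd_coe, one_smul, div_one]
    rw [hf _ (by positivity), inv_pow]
    field_simp
  have h_punctured : ∫ x, f x * G ‖x‖ ∂μ =
      ∫ x : ({(0 : E)}ᶜ : Set E), f x * G ‖(x : E)‖ ∂μ.comap Subtype.val := by
    rw [integral_subtype_comap (measurableSet_singleton _).compl fun x ↦ f x * G ‖x‖,
      restrict_compl_singleton]
  rw [h_punctured, ← integral_congr_ae (Filter.Eventually.of_forall h_polar),
    μ.measurePreserving_homeomorphUnitSphereProd.integral_comp
      (Homeomorph.measurableEmbedding _)
      fun y : sphere (0 : E) 1 × Ioi (0 : ℝ) ↦ f y.1 * (y.2.1 ^ d * G y.2.1),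
    integral_prod_mul (fun y : sphere (0 : E) 1 ↦ f y) fun r : Ioi (0 : ℝ) ↦ r.1 ^ d * G r.1]
  congr 1
  simp only [Measure.volumeIoiPow, ENNReal.ofReal]
  rw [integral_withDensity_eq_integral_smul ((measurable_subtype_coe.pow_const _).real_toNNReal),
    integral_subtype_comap measurableSet_Ioi
      fun r ↦ Real.toNNReal (r ^ (finrank ℝ E - 1)) • (r ^ d * G r)]
  refine setIntegral_congr_fun measurableSet_Ioi fun r hr ↦ ?_
  rw [NNReal.smul_def, Real.coe_toNNReal _ (pow_nonneg hr.out.le _), smul_eq_mul, pow_add,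
    mul_assoc]

theorem setIntegral_closedBall_of_homogeneous
    (hf : ∀ r : ℝ, 0 < r → ∀ x, f (r • x) = r ^ d * f x) {p : ℝ} (hp : 0 < p) :
    ∫ x in closedBall (0 : E) 1, f x ∂μ =
      (∫ x, f x * exp (-‖x‖ ^ p) ∂μ) / Gamma ((finrank ℝ E + d) / p + 1) := by
  set m := finrank ℝ E - 1 + d
  have hm : (m : ℝ) + 1 = finrank ℝ E + d := by
    have : 1 ≤ finrank ℝ E := finrank_pos
    push_cast [m, Nat.cast_sub this]
    ring
  have h_ball : ∫ x in closedBall (0 : E) 1, f x ∂μ = ∫ x, f x * (Iic 1).indicator 1 ‖x‖ ∂μ := by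
    rw [← integral_indicator measurableSet_closedBall]
    congr 1 with x
    by_cases hx : ‖x‖ ≤ 1 <;> simp [hx]
  have h_radial_ball : ∫ r in Ioi (0 : ℝ), r ^ m * (Iic 1).indicator 1 r = 1 / (m + 1) := by
    have h_ind (r : ℝ) : r ^ m * (Iic 1).indicator 1 r = (Iic 1).indicator (· ^ m) r := by
      by_cases hr : r ≤ 1 <;> simp [hr]
    simp_rw [h_ind]
    rw [setIntegral_indicator measurableSet_Iic, Ioi_inter_Iic,
      ← intervalIntegral.integral_of_le zero_le_one, integral_pow]
    simp
  have h_radial_exp : ∫ r in Ioi (0 : ℝ), r ^ m * exp (-r ^ p) = 1 / p * Gamma ((m + 1) / p) := by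
    simp_rw [← rpow_natCast]
    exact integral_rpow_mul_exp_neg_rpow hp (by linarith [m.cast_nonneg (α := ℝ)])
  rw [h_ball, integral_mul_comp_norm_of_homogeneous μ hf, h_radial_ball,
    integral_mul_comp_norm_of_homogeneous μ hf (fun r ↦ exp (-r ^ p)), h_radial_exp, ← hm,
    Gamma_add_one (by positivity)]
  field_simp

end Homogeneous

section Moments

variable {p : ℝ}

theorem integral_exp_neg_abs_rpow (hp : 0 < p) :
    ∫ t : ℝ, exp (-|t| ^ p) = 2 * Gamma (1 / p + 1) := by
  rw [integral_comp_abs (f := fun t ↦ exp (-t ^ p)), integral_exp_neg_rpow hp]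

theorem integral_sq_mul_exp_neg_abs_rpow (hp : 0 < p) :
    ∫ t : ℝ, t ^ 2 * exp (-|t| ^ p) = 2 * (1 / p * Gamma (3 / p)) := by
  have h_abs (t : ℝ) : t ^ 2 * exp (-|t| ^ p) = |t| ^ (2 : ℝ) * exp (-|t| ^ p) := by
    rw [rpow_two, sq_abs]
  simp_rw [h_abs]
  rw [integral_comp_abs (f := fun t ↦ t ^ (2 : ℝ) * exp (-t ^ p)),
    integral_rpow_mul_exp_neg_rpow hp (by norm_num)]
  norm_num

theorem integral_mul_exp_neg_abs_rpow : ∫ t : ℝ, t * exp (-|t| ^ p) = 0 := by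
  have h_odd := integral_neg_eq_self (fun t : ℝ ↦ t * exp (-|t| ^ p)) volume
  simp only [abs_neg, neg_mul, integral_neg] at h_odd
  linarith

variable {ι : Type*} [Fintype ι] [DecidableEq ι]

theorem integral_mul_mul_exp_neg_sum_abs_rpow (hp : 0 < p) (i j : ι) :
    ∫ x : ι → ℝ, x i * x j * exp (-∑ k, |x k| ^ p) =
      if i = j then 2 * (1 / p * Gamma (3 / p)) * (2 * Gamma (1 / p + 1)) ^ (Fintype.card ι - 1)
      else 0 := by
  have h_prod (x : ι → ℝ) : x i * x j * exp (-∑ k, |x k| ^ p) =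
      ∏ k, (if k = i then x k else 1) * (if k = j then x k else 1) * exp (-|x k| ^ p) := by
    rw [Finset.prod_mul_distrib, Finset.prod_mul_distrib, Finset.prod_ite_eq',
      Finset.prod_ite_eq', ← exp_sum, Finset.sum_neg_distrib]
    simp
  simp_rw [h_prod]
  rw [integral_fintype_prod_volume_eq_prod
    (fun k t ↦ (if k = i then t else 1) * (if k = j then t else 1) * exp (-|t| ^ p))]
  split_ifs with hij
  · subst hij
    rw [← Finset.mul_prod_erase _ _ (Finset.mem_univ i),
      Finset.prod_congr rfl (g := fun _ ↦ 2 * Gamma (1 / p + 1)) fun k hk ↦ by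
        simp [Finset.ne_of_mem_erase hk, integral_exp_neg_abs_rpow hp],
      Finset.prod_const, Finset.card_erase_of_mem (Finset.mem_univ i), Finset.card_univ]
    simp [← sq, integral_sq_mul_exp_neg_abs_rpow hp]
  · exact Finset.prod_eq_zero (Finset.mem_univ i) (by simp [hij, integral_mul_exp_neg_abs_rpow])

end Moments

section LpBall

variable {ι : Type*} [Fintype ι] {p : ℝ}

theorem fact_one_le_ofReal (hp : 1 ≤ p) : Fact (1 ≤ ENNReal.ofReal p) :=
  ⟨by simpa using ENNReal.ofReal_le_ofReal hp⟩

theorem norm_toLp_rpow (hp : 0 < p) (x : ι → ℝ) :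
    ‖WithLp.toLp (.ofReal p) x‖ ^ p = ∑ i, |x i| ^ p := by
  have hp' : (ENNReal.ofReal p).toReal = p := ENNReal.toReal_ofReal hp.le
  rw [PiLp.norm_eq_sum (by rwa [hp']), hp', one_div,
    rpow_inv_rpow (by positivity) hp.ne']
  simp

theorem sum_rpow_le_one_iff_norm_toLp_le_one (hp : 1 ≤ p) (x : ι → ℝ) :
    ∑ i, |x i| ^ p ≤ 1 ↔ ‖WithLp.toLp (.ofReal p) x‖ ≤ 1 := by
  have := fact_one_le_ofReal hp
  have hp : 0 < p := by linarith
  rw [← rpow_le_rpow_iff (norm_nonneg (WithLp.toLp (.ofReal p) x)) zero_le_one hp, one_rpow,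
    norm_toLp_rpow hp]

theorem isCompact_setOf_sum_rpow_le_one (hp : 1 ≤ p) :
    IsCompact {x : ι → ℝ | ∑ i, |x i| ^ p ≤ 1} := by
  have := fact_one_le_ofReal hp
  have h_preimage : {x : ι → ℝ | ∑ i, |x i| ^ p ≤ 1} =
      (PiLp.continuousLinearEquiv (.ofReal p) ℝ fun _ : ι ↦ ℝ).symm ⁻¹' closedBall 0 1 := by
    ext x
    simp [sum_rpow_le_one_iff_norm_toLp_le_one hp]
  rw [h_preimage]
  exact (PiLp.continuousLinearEquiv _ ℝ _).symm.toHomeomorph.isCompact_preimage.2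
    (isCompact_closedBall 0 1)

theorem setIntegral_setOf_sum_rpow_le_one_of_homogeneous [Nonempty ι] (hp : 1 ≤ p)
    {f : (ι → ℝ) → ℝ} {d : ℕ} (hf : ∀ r : ℝ, 0 < r → ∀ x, f (r • x) = r ^ d * f x) :
    ∫ x in {x : ι → ℝ | ∑ i, |x i| ^ p ≤ 1}, f x =
      (∫ x, f x * exp (-∑ i, |x i| ^ p)) / Gamma ((Fintype.card ι + d) / p + 1) := by
  have := fact_one_le_ofReal hp
  have hp0 : 0 < p := by linarith
  let e := (PiLp.continuousLinearEquiv (.ofReal p) ℝ fun _ : ι ↦ ℝ).symm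
  let μ := volume.map e
  have he : MeasurePreserving e volume μ := e.continuous.measurable.measurePreserving volume
  have he_emb : MeasurableEmbedding e := e.toHomeomorph.measurableEmbedding
  have h_finrank : finrank ℝ (PiLp (.ofReal p) fun _ : ι ↦ ℝ) = Fintype.card ι := by
    rw [e.toLinearEquiv.finrank_eq.symm, finrank_fintype_fun_eq_card]
  have key := setIntegral_closedBall_of_homogeneous μ (f := fun y ↦ f (WithLp.ofLp y))
    (fun r hr y ↦ hf r hr y) hp0
  rw [← he.setIntegral_preimage_emb he_emb, ← he.integral_comp he_emb, h_finrank] at key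
  have h_ball : e ⁻¹' closedBall 0 1 = {x : ι → ℝ | ∑ i, |x i| ^ p ≤ 1} := by
    ext x
    simpa [e] using (sum_rpow_le_one_iff_norm_toLp_le_one hp x).symm
  have h_norm (x : ι → ℝ) : ‖e x‖ ^ p = ∑ i, |x i| ^ p := norm_toLp_rpow hp0 x
  simp only [h_ball, h_norm] at key
  simpa only [e, PiLp.coe_symm_continuousLinearEquiv, WithLp.ofLp_toLp] using key

theorem volume_setOf_sum_rpow_le_one [Nonempty ι] (hp : 1 ≤ p) :
    volume {x : ι → ℝ | ∑ i, |x i| ^ p ≤ 1} =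
      .ofReal ((2 * Gamma (1 / p + 1)) ^ Fintype.card ι / Gamma (Fintype.card ι / p + 1)) := by
  have hp0 : 0 < p := by linarith
  have h_set : {x : ι → ℝ | ∑ i, |x i| ^ p ≤ 1} = {x | (∑ i, |x i| ^ p) ^ (1 / p) ≤ 1} := by
    ext x
    rw [mem_ofPred_eq, mem_ofPred_eq, ← rpow_le_rpow_iff (by positivity) zero_le_one
      (one_div_pos.2 hp0), one_rpow]
  rw [h_set, volume_sum_rpow_le _ hp, ENNReal.ofReal_one, one_pow, one_mul]

noncomputable def lpBallSecondMoment (ι : Type*) [Fintype ι] (p : ℝ) : ℝ :=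
  2 * (1 / p * Gamma (3 / p)) * (2 * Gamma (1 / p + 1)) ^ (Fintype.card ι - 1) /
    Gamma ((Fintype.card ι + 2) / p + 1)

theorem setIntegral_setOf_sum_rpow_le_one_mul [DecidableEq ι] [Nonempty ι] (hp : 1 ≤ p)
    (i j : ι) :
    ∫ x in {x : ι → ℝ | ∑ k, |x k| ^ p ≤ 1}, x i * x j =
      if i = j then lpBallSecondMoment ι p else 0 := by
  rw [setIntegral_setOf_sum_rpow_le_one_of_homogeneous hp (d := 2) fun r _ x ↦ by
      simp only [Pi.smul_apply, smul_eq_mul]; ring,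
    integral_mul_mul_exp_neg_sum_abs_rpow (by linarith) i j, lpBallSecondMoment]
  split_ifs <;> simp

theorem integrableOn_setOf_sum_rpow_le_one_mul (hp : 1 ≤ p) (i j : ι) :
    IntegrableOn (fun x : ι → ℝ ↦ x i * x j) {x | ∑ k, |x k| ^ p ≤ 1} :=
  (by fun_prop : Continuous fun x : ι → ℝ ↦ x i * x j).continuousOn.integrableOn_compact
    (isCompact_setOf_sum_rpow_le_one hp)

theorem lpBallSecondMoment_div_volume [Nonempty ι] (hp : 1 ≤ p) :
    lpBallSecondMoment ι p / (volume {x : ι → ℝ | ∑ i, |x i| ^ p ≤ 1}).toReal =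
      Gamma (3 / p) * Gamma (1 + Fintype.card ι / p) /
        (Gamma (1 / p) * Gamma (1 + (Fintype.card ι + 2) / p)) := by
  have hp0 : 0 < p := by linarith
  obtain ⟨m, hm⟩ : ∃ m, Fintype.card ι = m + 1 := Nat.exists_eq_add_one.2 Fintype.card_pos
  have h1 : 0 < Gamma (1 / p) := Gamma_pos_of_pos (by positivity)
  have h2 : 0 < Gamma (Fintype.card ι / p + 1) := Gamma_pos_of_pos (by positivity)
  have h3 : 0 < Gamma ((Fintype.card ι + 2) / p + 1) := Gamma_pos_of_pos (by positivity)
  rw [volume_setOf_sum_rpow_le_one hp, ENNReal.toReal_ofReal (by positivity),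
    lpBallSecondMoment, Gamma_add_one (by positivity), add_comm 1, add_comm 1]
  rw [hm] at h2 h3 ⊢
  simp only [Nat.add_sub_cancel, pow_succ]
  field_simp

end LpBall

section Isotropic

variable {ι : Type*} [Fintype ι] [DecidableEq ι] {μ : Measure (ι → ℝ)} {c : ℝ}

theorem integral_sum_mul_sq_of_isotropic (h_int : ∀ i j, Integrable (fun y ↦ y i * y j) μ)
    (h_mom : ∀ i j, ∫ y, y i * y j ∂μ = if i = j then c else 0) (x : ι → ℝ) :
    ∫ y, (∑ i, x i * y i) ^ 2 ∂μ = c * ∑ i, x i ^ 2 := by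
  have h_expand (y : ι → ℝ) : (∑ i, x i * y i) ^ 2 = ∑ i, ∑ j, x i * x j * (y i * y j) := by
    rw [sq, Finset.sum_mul_sum]
    exact Finset.sum_congr rfl fun i _ ↦ Finset.sum_congr rfl fun j _ ↦ by ring
  simp_rw [h_expand]
  rw [integral_finsetSum _ fun i _ ↦ integrable_finsetSum _ fun j _ ↦ (h_int i j).const_mul _]
  simp_rw [integral_finsetSum _ fun j _ ↦ (h_int _ j).const_mul _, integral_const_mul, h_mom,
    mul_ite, mul_zero, Finset.sum_ite_eq, Finset.mem_univ, if_true, Finset.mul_sum, sq]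
  exact Finset.sum_congr rfl fun i _ ↦ by ring

theorem integral_sum_sq_of_isotropic (h_int : ∀ i j, Integrable (fun y ↦ y i * y j) μ)
    (h_mom : ∀ i j, ∫ y, y i * y j ∂μ = if i = j then c else 0) :
    ∫ y, ∑ i, y i ^ 2 ∂μ = Fintype.card ι * c := by
  simp_rw [sq]
  rw [integral_finsetSum _ fun i _ ↦ h_int i i]
  simp [h_mom]

end Isotropic

theorem f_n_p_gamma (n : ℕ) (hn : 1 ≤ n) (p q : ℝ) (hp : 1 < p) (hpq : 1 / p + 1 / q = 1) :
    (∫ x in {x : Fin n → ℝ | ∑ i, |x i| ^ p ≤ 1},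
        ∫ y in {y : Fin n → ℝ | ∑ i, |y i| ^ q ≤ 1}, (∑ i, x i * y i) ^ 2) /
      ((volume {x : Fin n → ℝ | ∑ i, |x i| ^ p ≤ 1}).toReal *
        (volume {y : Fin n → ℝ | ∑ i, |y i| ^ q ≤ 1}).toReal) =
      n * (Real.Gamma (3 / p) * Real.Gamma (3 / q) *
            Real.Gamma (1 + n / p) * Real.Gamma (1 + n / q)) /
        (Real.Gamma (1 / p) * Real.Gamma (1 / q) *
          Real.Gamma (1 + ((n : ℝ) + 2) / p) * Real.Gamma (1 + ((n : ℝ) + 2) / q)) := by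
  have hq : 1 < q := (Real.holderConjugate_iff.2 ⟨hp, by simpa only [one_div] using hpq⟩).symm.lt
  have : Nonempty (Fin n) := ⟨⟨0, hn⟩⟩
  rw [setIntegral_congr_fun (isCompact_setOf_sum_rpow_le_one hp.le).isClosed.measurableSet
      fun x _ ↦ integral_sum_mul_sq_of_isotropic (integrableOn_setOf_sum_rpow_le_one_mul hq.le)
        (setIntegral_setOf_sum_rpow_le_one_mul hq.le) x,
    integral_const_mul,
    integral_sum_sq_of_isotropic (integrableOn_setOf_sum_rpow_le_one_mul hp.le)
      (setIntegral_setOf_sum_rpow_le_one_mul hp.le), Fintype.card_fin,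
    show ∀ a b c d : ℝ, b * (n * a) / (c * d) = n * (a / c) * (b / d) by intros; ring,
    lpBallSecondMoment_div_volume hp.le, lpBallSecondMoment_div_volume hq.le, Fintype.card_fin]
  ring
end
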